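/- Let B be a bialgebra over K with m = Ker ε, and consider the horizontal differential δ_h^{p,q} : C^{p,q} → C^{p,q+1}, where C^{p,q} = Hom(B^{⊗q}, B^{⊗p}), given by δ_h^{p,q}(f) = λ^p ∘ (Id ⊗ f) + Σ_{i=1}^{q} (−1)^i f ∘ μ_i^q + (−1)^{q+1} ρ^p ∘ (f ⊗ Id). If f ∈ C^{p,q} factors through m (that is, f lies in the image of the embedding D^{p,q} ↪ C^{p,q}, where D^{p,q} = Hom(m^{⊗q}, m^{⊗p})), then δ_h^{p,q}(f) also factors through m. -/

import Mathlib

open TensorProduct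

namespace GBD

variable (K B : Type*) [Field K] [Ring B] [Bialgebra K B]

/-- The `n`-th tensor power `B^{⊗n}`. -/
abbrev T (n : ℕ) := PiTensorProduct K (fun _ : Fin n => B)

/-- Splitting off the first tensor factor: `B^{⊗(n+1)} ≃ B ⊗ B^{⊗n}`. -/
noncomputable def split (n : ℕ) : T K B (n + 1) ≃ₗ[K] B ⊗[K] T K B n :=
  ((PiTensorProduct.reindex K (fun _ : Fin (n+1) => B)
      ((finCongr (Nat.add_comm 1 n)).symm.trans finSumFinEquiv.symm)).trans
    (PiTensorProduct.tmulEquiv K B).symm).trans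
      (TensorProduct.congr (PiTensorProduct.subsingletonEquiv (0 : Fin 1))
        (LinearEquiv.refl K _))

/-- Splitting off the last tensor factor: `B^{⊗(n+1)} ≃ B^{⊗n} ⊗ B`. -/
noncomputable def splitLast (n : ℕ) : T K B (n + 1) ≃ₗ[K] T K B n ⊗[K] B :=
  ((PiTensorProduct.reindex K (fun _ : Fin (n+1) => B) finSumFinEquiv.symm).trans
    (PiTensorProduct.tmulEquiv K B).symm).trans
      (TensorProduct.congr (LinearEquiv.refl K _)
        (PiTensorProduct.subsingletonEquiv (0 : Fin 1)))

/-- Iterated comultiplication `Δ^{(n)} : B → B^{⊗n}` (with `Δ^{(0)} = ε`, `Δ^{(1)} = Id`). -/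
noncomputable def iterComul : (n : ℕ) → (B →ₗ[K] T K B n)
  | 0 => (PiTensorProduct.isEmptyEquiv (Fin 0)).symm.toLinearMap ∘ₗ
      (Coalgebra.counit (R := K) (A := B))
  | (n + 1) => (split K B n).symm.toLinearMap ∘ₗ
      LinearMap.lTensor B (iterComul n) ∘ₗ (Coalgebra.comul (R := K) (A := B))

/-- Componentwise comultiplication `B^{⊗n} → B^{⊗n} ⊗ B^{⊗n}`,
`b¹⊗⋯⊗bⁿ ↦ (b¹₍₁₎⊗⋯⊗bⁿ₍₁₎) ⊗ (b¹₍₂₎⊗⋯⊗bⁿ₍₂₎)`. -/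
noncomputable def comulT : (n : ℕ) → (T K B n →ₗ[K] T K B n ⊗[K] T K B n)
  | 0 => (TensorProduct.congr (PiTensorProduct.isEmptyEquiv (Fin 0)).symm
        (PiTensorProduct.isEmptyEquiv (Fin 0)).symm).toLinearMap ∘ₗ
      (TensorProduct.lid K K).symm.toLinearMap ∘ₗ
        (PiTensorProduct.isEmptyEquiv (Fin 0)).toLinearMap
  | (n + 1) =>
      (TensorProduct.congr (split K B n).symm (split K B n).symm).toLinearMap ∘ₗ
        (TensorProduct.tensorTensorTensorComm K B B (T K B n) (T K B n)).toLinearMap ∘ₗ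
          TensorProduct.map (Coalgebra.comul (R := K) (A := B)) (comulT n) ∘ₗ
            (split K B n).toLinearMap

/-- The product of all tensor factors, `B^{⊗n} → B`, `b¹⊗⋯⊗bⁿ ↦ b¹⋯bⁿ`. -/
noncomputable def prodT (n : ℕ) : T K B n →ₗ[K] B :=
  PiTensorProduct.lift (MultilinearMap.mkPiAlgebraFin K n B)

/-- `μ_i : B^{⊗(q+1)} → B^{⊗q}` multiplying the `i`-th and `(i+1)`-th factors
(`i` is 0-indexed here). -/
noncomputable def mulAt : (q : ℕ) → ℕ → (T K B (q + 1) →ₗ[K] T K B q)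
  | 0, _ => 0
  | (q + 1), 0 => (split K B q).symm.toLinearMap ∘ₗ
      LinearMap.rTensor (T K B q) (LinearMap.mul' K B) ∘ₗ
        (TensorProduct.assoc K B B (T K B q)).symm.toLinearMap ∘ₗ
          LinearMap.lTensor B (split K B q).toLinearMap ∘ₗ
            (split K B (q + 1)).toLinearMap
  | (q + 1), (i + 1) => (split K B q).symm.toLinearMap ∘ₗ
      LinearMap.lTensor B (mulAt q i) ∘ₗ (split K B (q + 1)).toLinearMap

/-- `Δ_j : B^{⊗p} → B^{⊗(p+1)}` applying `Δ` to the `j`-th factor (`j` is 0-indexed). -/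
noncomputable def comulAt : (p : ℕ) → ℕ → (T K B p →ₗ[K] T K B (p + 1))
  | 0, _ => 0
  | (p + 1), 0 => (split K B (p + 1)).symm.toLinearMap ∘ₗ
      LinearMap.lTensor B (split K B p).symm.toLinearMap ∘ₗ
        (TensorProduct.assoc K B B (T K B p)).toLinearMap ∘ₗ
          LinearMap.rTensor (T K B p) (Coalgebra.comul (R := K) (A := B)) ∘ₗ
            (split K B p).toLinearMap
  | (p + 1), (i + 1) => (split K B (p + 1)).symm.toLinearMap ∘ₗ
      LinearMap.lTensor B (comulAt p i) ∘ₗ (split K B p).toLinearMap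

/-- `λ^p : B^{⊗(p+1)} → B^{⊗p}`, `b¹⊗b²⊗⋯⊗b^{p+1} ↦ b¹₍₁₎b² ⊗ ⋯ ⊗ b¹₍ₚ₎b^{p+1}`. -/
noncomputable def lamMap (p : ℕ) : T K B (p + 1) →ₗ[K] T K B p :=
  LinearMap.mul' K (T K B p) ∘ₗ TensorProduct.map (iterComul K B p) LinearMap.id ∘ₗ
    (split K B p).toLinearMap

/-- `ρ^p : B^{⊗(p+1)} → B^{⊗p}`, `b¹⊗⋯⊗b^p⊗b^{p+1} ↦ b¹b^{p+1}₍₁₎ ⊗ ⋯ ⊗ b^p b^{p+1}₍ₚ₎`. -/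
noncomputable def rhoMap (p : ℕ) : T K B (p + 1) →ₗ[K] T K B p :=
  LinearMap.mul' K (T K B p) ∘ₗ TensorProduct.map LinearMap.id (iterComul K B p) ∘ₗ
    (splitLast K B p).toLinearMap

/-- `σ^q : B^{⊗q} → B^{⊗(q+1)}`, `b¹⊗⋯⊗b^q ↦ (b¹₍₁₎⋯b^q₍₁₎) ⊗ b¹₍₂₎ ⊗ ⋯ ⊗ b^q₍₂₎`. -/
noncomputable def sigmaMap (q : ℕ) : T K B q →ₗ[K] T K B (q + 1) :=
  (split K B q).symm.toLinearMap ∘ₗ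
    TensorProduct.map (prodT K B q) LinearMap.id ∘ₗ comulT K B q

/-- `τ^q : B^{⊗q} → B^{⊗(q+1)}`, `b¹⊗⋯⊗b^q ↦ b¹₍₁₎ ⊗ ⋯ ⊗ b^q₍₁₎ ⊗ (b¹₍₂₎⋯b^q₍₂₎)`. -/
noncomputable def tauMap (q : ℕ) : T K B q →ₗ[K] T K B (q + 1) :=
  (splitLast K B q).symm.toLinearMap ∘ₗ
    TensorProduct.map LinearMap.id (prodT K B q) ∘ₗ comulT K B q

/-- The horizontal (Hochschild-type) differential
`δ_h^{p,q} : Hom(B^{⊗q}, B^{⊗p}) → Hom(B^{⊗(q+1)}, B^{⊗p})`. -/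
noncomputable def deltaH (p q : ℕ) (f : T K B q →ₗ[K] T K B p) :
    T K B (q + 1) →ₗ[K] T K B p :=
  lamMap K B p ∘ₗ (split K B p).symm.toLinearMap ∘ₗ LinearMap.lTensor B f ∘ₗ
      (split K B q).toLinearMap
    + ∑ i ∈ Finset.range q, ((-1 : ℤ) ^ (i + 1)) • (f ∘ₗ mulAt K B q i)
    + ((-1 : ℤ) ^ (q + 1)) •
        (rhoMap K B p ∘ₗ (splitLast K B p).symm.toLinearMap ∘ₗ LinearMap.rTensor B f ∘ₗ
          (splitLast K B q).toLinearMap)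

/-- The vertical (coHochschild-type) differential
`δ_c^{p,q} : Hom(B^{⊗q}, B^{⊗p}) → Hom(B^{⊗q}, B^{⊗(p+1)})`. -/
noncomputable def deltaCv (p q : ℕ) (f : T K B q →ₗ[K] T K B p) :
    T K B q →ₗ[K] T K B (p + 1) :=
  (split K B p).symm.toLinearMap ∘ₗ LinearMap.lTensor B f ∘ₗ (split K B q).toLinearMap ∘ₗ
      sigmaMap K B q
    + ∑ j ∈ Finset.range p, ((-1 : ℤ) ^ (j + 1)) • (comulAt K B p j ∘ₗ f)
    + ((-1 : ℤ) ^ (p + 1)) •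
        ((splitLast K B p).symm.toLinearMap ∘ₗ LinearMap.rTensor B f ∘ₗ
          (splitLast K B q).toLinearMap ∘ₗ tauMap K B q)


/-- The augmentation ideal `m = ker ε`. -/
noncomputable def aug : Submodule K B := LinearMap.ker (Coalgebra.counit (R := K) (A := B))

/-- The projection `π : B → m`, `π(b) = b − ε(b)·1`. -/
noncomputable def projAug : B →ₗ[K] aug K B :=
  LinearMap.codRestrict (aug K B)
    (LinearMap.id - Algebra.linearMap K B ∘ₗ Coalgebra.counit)
    (fun b => by simp [aug, LinearMap.mem_ker])

/-- `f : B^{⊗q} → B^{⊗p}` factors through the augmentation ideal, i.e. `f` lies in the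
image of the embedding `D^{p,q} = Hom(m^{⊗q}, m^{⊗p}) ↪ C^{p,q}`,
`f' ↦ i^{⊗p} ∘ f' ∘ π^{⊗q}`. -/
def FactorsThroughAug (p q : ℕ) (f : T K B q →ₗ[K] T K B p) : Prop :=
  ∃ f' : PiTensorProduct K (fun _ : Fin q => aug K B) →ₗ[K]
      PiTensorProduct K (fun _ : Fin p => aug K B),
    f = PiTensorProduct.map (fun _ : Fin p => (aug K B).subtype) ∘ₗ f' ∘ₗ
          PiTensorProduct.map (fun _ : Fin q => projAug K B)
/-! `f` factors through `m` exactly when it takes values in the image of `m^{⊗p}` and is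
normalized, i.e. kills every pure tensor with a factor `1` (as `B = K·1 ⊕ m`). The first property
passes to `δ_h f` because `m` is a two-sided ideal, into which `λ` and `ρ` multiply. For the
second, if `cʲ = 1` then of the `q + 2` terms of `δ_h f (c⁰ ⊗ ⋯ ⊗ c^q)` only the two that absorb
`cʲ` into a neighbour survive; both equal `f` of the tensor with `cʲ` deleted, with opposite
signs. -/

open PiTensorProduct

section FinTuple

variable {α : Type*} [MulOneClass α] {n : ℕ}

theorem _root_.Fin.contractNth_castSucc_of_left_eq_one (i : Fin n) (c : Fin (n + 1) → α)
    (h : c i.castSucc = 1) :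
    Fin.contractNth i.castSucc (· * ·) c = Fin.removeNth i.castSucc c := by
  funext k
  by_cases hk : k = i
  · subst hk
    simp [Fin.contractNth_apply_of_eq, h, Fin.removeNth]
  · rw [Fin.contractNth_apply_of_ne _ _ _ _ (by simpa [Fin.val_inj] using Ne.symm hk)]
    rfl

theorem _root_.Fin.contractNth_castSucc_of_right_eq_one (i : Fin n) (c : Fin (n + 1) → α)
    (h : c i.succ = 1) : Fin.contractNth i.castSucc (· * ·) c = Fin.removeNth i.succ c := by
  funext k
  by_cases hk : k = i
  · subst hk
    simp [Fin.contractNth_apply_of_eq, h, Fin.removeNth]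
  · rw [Fin.contractNth_apply_of_ne _ _ _ _ (by simpa [Fin.val_inj] using Ne.symm hk),
      Fin.removeNth]
    congr 1
    rcases lt_or_gt_of_ne hk with hlt | hgt
    · rw [Fin.succAbove_succ_of_le _ _ hlt.le,
        Fin.succAbove_of_castSucc_lt _ _ (by simpa using hlt)]
    · rw [Fin.succAbove_succ_of_lt _ _ hgt,
        Fin.succAbove_of_le_castSucc _ _ (by simpa using hgt.le)]

theorem _root_.Fin.exists_removeNth_eq_one {c : Fin (n + 1) → α} {m j : Fin (n + 1)}
    (hm : c m = 1) (hj : m ≠ j) : ∃ k, Fin.removeNth j c k = 1 := by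
  obtain ⟨k, hk⟩ := Fin.exists_succAbove_eq hj
  exact ⟨k, by rw [Fin.removeNth, hk, hm]⟩

theorem _root_.Fin.exists_contractNth_castSucc_eq_one {c : Fin (n + 1) → α} {m : Fin (n + 1)}
    (hm : c m = 1) {i : Fin n} (hl : m ≠ i.castSucc) (hr : m ≠ i.succ) :
    ∃ k, Fin.contractNth i.castSucc (· * ·) c k = 1 := by
  obtain ⟨k, hk⟩ := Fin.exists_succAbove_eq hl
  have hki : k ≠ i := by rintro rfl; exact hr (by rw [← hk, Fin.succAbove_castSucc_self])
  refine ⟨k, ?_⟩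
  rw [Fin.contractNth_apply_of_ne _ _ _ _ (by simpa [Fin.val_inj] using Ne.symm hki), hk, hm]

theorem _root_.Fin.contractNth_succ_castSucc (i : Fin n) (c : Fin (n + 2) → α) :
    Fin.contractNth i.succ.castSucc (· * ·) c
      = Fin.cons (c 0) (Fin.contractNth i.castSucc (· * ·) (Fin.tail c)) := by
  funext k
  refine Fin.cases ?_ (fun k => ?_) k
  · simp [Fin.contractNth]
  · simp [Fin.contractNth, Fin.tail]

theorem _root_.Fin.contractNth_zero (c : Fin (n + 2) → α) :
    Fin.contractNth 0 (· * ·) c = Fin.cons (c 0 * c 1) (Fin.tail (Fin.tail c)) := by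
  funext k
  refine Fin.cases ?_ (fun k => ?_) k
  · simp [Fin.contractNth]
  · simp [Fin.contractNth, Fin.tail]

end FinTuple

theorem _root_.Fin.sum_neg_one_pow_smul_ite_castSucc_or_succ {M : Type*} [AddCommGroup M]
    {n : ℕ} (m : Fin (n + 1)) (x : M) :
    ∑ k : Fin (n + 2), (-1 : ℤ) ^ (k : ℕ) • (if k = m.castSucc ∨ k = m.succ then x else 0)
      = 0 := by
  rw [Finset.sum_eq_add m.castSucc m.succ (Fin.castSucc_lt_succ (i := m)).ne
    (fun k _ hk => by simp [hk.1, hk.2]) (by simp) (by simp)]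
  simp [pow_succ]

section IdealTensorPower

variable {R ι A : Type*} [CommSemiring R] [Semiring A] [Algebra R A] {I : Submodule R A}

theorem _root_.PiTensorProduct.mul_mem_range_map_subtype (hI : ∀ a x, x ∈ I → a * x ∈ I)
    (z : ⨂[R] _ : ι, A) {w : ⨂[R] _ : ι, A} (hw : w ∈ LinearMap.range (map fun _ => I.subtype)) :
    z * w ∈ LinearMap.range (map fun _ => I.subtype) := by
  have hle : ⊤ * LinearMap.range (map fun _ : ι => I.subtype)
      ≤ LinearMap.range (map fun _ => I.subtype) := by
    rw [map_range_eq_span_tprod, ← span_tprod_eq_top, Submodule.span_mul_span, Submodule.span_le]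
    rintro _ ⟨_, ⟨b, rfl⟩, _, ⟨x, rfl⟩, rfl⟩
    exact Submodule.subset_span ⟨fun i => ⟨b i * x i, hI _ _ (x i).2⟩, by simp [Pi.mul_def]⟩
  exact hle (Submodule.mul_mem_mul trivial hw)

theorem _root_.PiTensorProduct.range_map_subtype_mul_mem (hI : ∀ x a, x ∈ I → x * a ∈ I)
    {w : ⨂[R] _ : ι, A} (hw : w ∈ LinearMap.range (map fun _ => I.subtype)) (z : ⨂[R] _ : ι, A) :
    w * z ∈ LinearMap.range (map fun _ => I.subtype) := by
  have hle : LinearMap.range (map fun _ : ι => I.subtype) * ⊤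
      ≤ LinearMap.range (map fun _ => I.subtype) := by
    rw [map_range_eq_span_tprod, ← span_tprod_eq_top, Submodule.span_mul_span, Submodule.span_le]
    rintro _ ⟨_, ⟨x, rfl⟩, _, ⟨b, rfl⟩, rfl⟩
    exact Submodule.subset_span ⟨fun i => ⟨x i * b i, hI _ _ (x i).2⟩, by simp [Pi.mul_def]⟩
  exact hle (Submodule.mul_mem_mul hw trivial)

end IdealTensorPower

variable {K B}

theorem split_tprod (n : ℕ) (c : Fin (n + 1) → B) :
    split K B n (tprod K c) = c 0 ⊗ₜ[K] tprod K (Fin.tail c) := by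
  simp only [split, LinearEquiv.trans_apply, reindex_tprod, tmulEquiv_symm_apply,
    TensorProduct.congr_tmul, subsingletonEquiv_apply_tprod, LinearEquiv.refl_apply]
  congr 2
  funext i
  congr 1
  ext
  simp

theorem splitLast_tprod (n : ℕ) (c : Fin (n + 1) → B) :
    splitLast K B n (tprod K c) = tprod K (Fin.init c) ⊗ₜ[K] c (Fin.last n) := by
  simp only [splitLast, LinearEquiv.trans_apply, reindex_tprod, tmulEquiv_symm_apply,
    TensorProduct.congr_tmul, subsingletonEquiv_apply_tprod, LinearEquiv.refl_apply]
  rfl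

theorem split_symm_tmul (n : ℕ) (b : B) (d : Fin n → B) :
    (split K B n).symm (b ⊗ₜ[K] tprod K d) = tprod K (Fin.cons b d : Fin (n + 1) → B) := by
  rw [LinearEquiv.symm_apply_eq, split_tprod, Fin.cons_zero, Fin.tail_cons]

theorem iterComul_one (p : ℕ) : iterComul K B p 1 = 1 := by
  induction p with
  | zero =>
    apply (isEmptyEquiv (Fin 0)).injective
    simp [iterComul, one_def, isEmptyEquiv_apply_tprod]
  | succ p ih =>
    simp only [iterComul, LinearMap.comp_apply, LinearEquiv.coe_coe, Bialgebra.comul_one,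
      Algebra.TensorProduct.one_def, LinearMap.lTensor_tmul, ih]
    rw [one_def, split_symm_tmul, one_def]
    congr 1
    exact Fin.cons_self_tail 1

theorem mulAt_tprod : ∀ (q : ℕ) (i : Fin q) (c : Fin (q + 1) → B),
    mulAt K B q i (tprod K c) = tprod K (Fin.contractNth i.castSucc (· * ·) c)
  | q + 1, i, c => by
    induction i using Fin.cases with
    | zero =>
      simp only [Fin.val_zero, mulAt, LinearMap.comp_apply, LinearEquiv.coe_coe, split_tprod,
        LinearMap.lTensor_tmul, TensorProduct.assoc_symm_tmul, LinearMap.rTensor_tmul,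
        LinearMap.mul'_apply, split_symm_tmul, Fin.castSucc_zero, Fin.contractNth_zero]
      rfl
    | succ i =>
      simp only [Fin.val_succ, mulAt, LinearMap.comp_apply, LinearEquiv.coe_coe, split_tprod,
        LinearMap.lTensor_tmul, mulAt_tprod q i, split_symm_tmul, Fin.contractNth_succ_castSucc]

/-- The `q + 2` terms of `δ_h^{p,q}(f)(c⁰ ⊗ ⋯ ⊗ c^q)`: the `λ`-term, the terms `f ∘ μ_i`, and
the `ρ`-term. -/
noncomputable def deltaHTerm {p q : ℕ} (f : T K B q →ₗ[K] T K B p) (c : Fin (q + 1) → B) :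
    Fin (q + 2) → T K B p :=
  Fin.cons (iterComul K B p (c 0) * f (tprod K (Fin.tail c)))
    (Fin.snoc (fun i : Fin q => f (tprod K (Fin.contractNth i.castSucc (· * ·) c)))
      (f (tprod K (Fin.init c)) * iterComul K B p (c (Fin.last q))))

theorem deltaH_tprod {p q : ℕ} (f : T K B q →ₗ[K] T K B p) (c : Fin (q + 1) → B) :
    deltaH K B p q f (tprod K c) = ∑ k : Fin (q + 2), (-1 : ℤ) ^ (k : ℕ) • deltaHTerm f c k := by
  -- `LinearMap.smul_apply` does not fire on the `ℤ`-action used in `deltaH`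
  have zsmul_apply (k : ℤ) (g : T K B (q + 1) →ₗ[K] T K B p) (x) : (k • g) x = k • g x := rfl
  simp only [deltaH, LinearMap.add_apply, LinearMap.sum_apply, zsmul_apply, LinearMap.comp_apply,
    LinearEquiv.coe_coe, split_tprod, splitLast_tprod, LinearMap.lTensor_tmul,
    LinearMap.rTensor_tmul, lamMap, rhoMap, LinearEquiv.apply_symm_apply, TensorProduct.map_tmul,
    LinearMap.mul'_apply, LinearMap.id_coe, id_eq, ← Fin.sum_univ_eq_sum_range, mulAt_tprod]
  rw [Fin.sum_univ_succ, Fin.sum_univ_castSucc]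
  simp [deltaHTerm, add_assoc]

def IsNormalized {p q : ℕ} (f : T K B q →ₗ[K] T K B p) : Prop :=
  ∀ (c : Fin q → B) (j : Fin q), c j = 1 → f (tprod K c) = 0

theorem deltaHTerm_eq {p q : ℕ} {f : T K B q →ₗ[K] T K B p} (hf : IsNormalized f)
    {c : Fin (q + 1) → B} {m : Fin (q + 1)} (hm : c m = 1) (k : Fin (q + 2)) :
    deltaHTerm f c k
      = if k = m.castSucc ∨ k = m.succ then f (tprod K (Fin.removeNth m c)) else 0 := by
  induction k using Fin.cases with
  | zero =>
    by_cases h0 : m = 0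
    · subst h0
      simp [deltaHTerm, hm, iterComul_one]
    · obtain ⟨j, hj⟩ := Fin.exists_removeNth_eq_one hm h0
      rw [Fin.removeNth_zero] at hj
      rw [if_neg (by
        simp only [Fin.ext_iff, Fin.val_zero, Fin.val_castSucc, Fin.val_succ] at h0 ⊢; omega)]
      simp [deltaHTerm, hf _ j hj]
  | succ k =>
    induction k using Fin.lastCases with
    | last =>
      by_cases hl : m = Fin.last q
      · subst hl
        simp [deltaHTerm, hm, iterComul_one]
      · obtain ⟨j, hj⟩ := Fin.exists_removeNth_eq_one hm hl
        rw [Fin.removeNth_last] at hj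
        rw [if_neg (by
          simp only [Fin.ext_iff, Fin.val_last, Fin.val_castSucc, Fin.val_succ] at hl ⊢; omega)]
        simp [deltaHTerm, hf _ j hj]
    | cast i =>
      by_cases hl : m = i.castSucc
      · subst hl
        simp [deltaHTerm, Fin.contractNth_castSucc_of_left_eq_one i c hm]
      by_cases hr : m = i.succ
      · subst hr
        simp [deltaHTerm, Fin.contractNth_castSucc_of_right_eq_one i c hm]
      obtain ⟨j, hj⟩ := Fin.exists_contractNth_castSucc_eq_one hm hl hr
      rw [if_neg (by simp only [Fin.ext_iff, Fin.val_castSucc, Fin.val_succ] at hl hr ⊢; omega)]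
      simp [deltaHTerm, hf _ j hj]

theorem IsNormalized.deltaH {p q : ℕ} {f : T K B q →ₗ[K] T K B p} (hf : IsNormalized f) :
    IsNormalized (deltaH K B p q f) := by
  intro c m hm
  simp only [deltaH_tprod, deltaHTerm_eq hf hm, Fin.sum_neg_one_pow_smul_ite_castSucc_or_succ]

theorem mul_mem_aug_left (a : B) {x : B} (hx : x ∈ aug K B) : a * x ∈ aug K B := by
  simp_all [aug, Bialgebra.counit_mul]

theorem mul_mem_aug_right (a : B) {x : B} (hx : x ∈ aug K B) : x * a ∈ aug K B := by
  simp_all [aug, Bialgebra.counit_mul]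

theorem projAug_apply (b : B) :
    (projAug K B b : B) = b - algebraMap K B (Coalgebra.counit b) := rfl

theorem projAug_of_mem {x : B} (hx : x ∈ aug K B) : projAug K B x = ⟨x, hx⟩ := by
  ext
  rw [projAug_apply, show Coalgebra.counit x = (0 : K) from hx, map_zero, sub_zero]

theorem projAug_one : projAug K B 1 = 0 := by
  ext
  simp [projAug_apply]

theorem projAug_comp_subtype : projAug K B ∘ₗ (aug K B).subtype = LinearMap.id := by
  ext x
  simp [projAug_of_mem x.2]

noncomputable abbrev augTensor (n : ℕ) : Submodule K (T K B n) :=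
  LinearMap.range (map fun _ : Fin n => (aug K B).subtype)

theorem deltaH_mem_augTensor {p q : ℕ} {f : T K B q →ₗ[K] T K B p}
    (hf : ∀ y, f y ∈ augTensor p) (v : T K B (q + 1)) : deltaH K B p q f v ∈ augTensor p := by
  have hlam (w : B ⊗[K] T K B q) :
      lamMap K B p ((split K B p).symm (LinearMap.lTensor B f w)) ∈ augTensor p := by
    induction w using TensorProduct.induction_on with
    | zero => simp
    | tmul b y =>
      simpa [lamMap] using mul_mem_range_map_subtype (fun a _ => mul_mem_aug_left a) _ (hf y)
    | add w w' hw hw' => simpa only [map_add] using add_mem hw hw'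
  have hrho (w : T K B q ⊗[K] B) :
      rhoMap K B p ((splitLast K B p).symm (LinearMap.rTensor B f w)) ∈ augTensor p := by
    induction w using TensorProduct.induction_on with
    | zero => simp
    | tmul y b =>
      simpa [rhoMap] using range_map_subtype_mul_mem (fun _ a => mul_mem_aug_right a) (hf y) _
    | add w w' hw hw' => simpa only [map_add] using add_mem hw hw'
  simp only [deltaH, LinearMap.add_apply, LinearMap.sum_apply, LinearMap.comp_apply,
    LinearEquiv.coe_coe]
  exact add_mem (add_mem (hlam _) (sum_mem fun i _ => zsmul_mem (hf _) _)) (zsmul_mem (hrho _) _)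

theorem IsNormalized.apply_tprod_projAug {p q : ℕ} {g : T K B q →ₗ[K] T K B p}
    (hg : IsNormalized g) (c : Fin q → B) :
    g (tprod K fun i => (projAug K B (c i) : B)) = g (tprod K c) := by
  classical
  let G := g.compMultilinearMap (tprod K)
  set a : Fin q → B := fun i => projAug K B (c i)
  set e : Fin q → B := fun i => algebraMap K B (Coalgebra.counit (R := K) (c i))
  have hc : c = a + e := by ext; simp [a, e, projAug_apply]
  -- expanding `g (a + e)` multilinearly, every term but `g a` has some factor in `K • 1`
  have hexpand : G (a + e) = G a := by
    rw [G.map_add_univ, Finset.sum_eq_single Finset.univ _ (by simp), Finset.piecewise_univ]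
    intro s _ hs
    obtain ⟨j, hj⟩ : ∃ j, j ∉ s := by simpa [Finset.eq_univ_iff_forall] using hs
    have hpj : s.piecewise a e j = Coalgebra.counit (R := K) (c j) • (1 : B) := by
      simp [Finset.piecewise_eq_of_notMem _ _ _ hj, e, Algebra.algebraMap_eq_smul_one]
    rw [← Function.update_eq_self j (s.piecewise a e), hpj, G.map_update_smul]
    simp [G, hg _ j (Function.update_self j 1 _)]
  simpa [G, ← hc] using hexpand.symm

theorem factorsThroughAug_iff {p q : ℕ} {f : T K B q →ₗ[K] T K B p} :
    FactorsThroughAug K B p q f ↔ IsNormalized f ∧ ∀ y, f y ∈ augTensor p := by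
  constructor
  · rintro ⟨f', rfl⟩
    refine ⟨fun c j hj => ?_, fun y => ⟨_, rfl⟩⟩
    simp only [LinearMap.comp_apply, map_tprod]
    rw [MultilinearMap.map_coord_zero _ j (m := fun i => projAug K B (c i))
      (by rw [hj, projAug_one]), map_zero, map_zero]
  · rintro ⟨hn, hr⟩
    refine ⟨map (fun _ => projAug K B) ∘ₗ f ∘ₗ map (fun _ => (aug K B).subtype), ?_⟩
    ext c
    obtain ⟨u, hu⟩ := hr (tprod K c)
    have hπι : map (fun _ => projAug K B) (map (fun _ : Fin p => (aug K B).subtype) u) = u := by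
      rw [← LinearMap.comp_apply, ← PiTensorProduct.map_comp, projAug_comp_subtype,
        PiTensorProduct.map_id, LinearMap.id_apply]
    simp [map_tprod, hn.apply_tprod_projAug, ← hu, hπι]

variable (K B)

theorem deltaH_factorsThroughAug (p q : ℕ)
    (f : T K B q →ₗ[K] T K B p) (hf : FactorsThroughAug K B p q f) :
    FactorsThroughAug K B p (q + 1) (deltaH K B p q f) := by
  rw [factorsThroughAug_iff] at hf ⊢
  exact ⟨hf.1.deltaH, deltaH_mem_augTensor hf.2⟩

end GBD
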